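/- arXiv:2310.04851 — 2 statements merged into one kernel-verified Lean document; each statement's English description precedes it below -/
import Mathlib

section
/- For every integer n ≥ 4, the star chromatic number of the tensor product satisfies χ_s(C_4 × C_n) = 5. -/
/-- The tensor (categorical) product of two simple graphs: `(u,v)` and `(u',v')` are
adjacent iff `u` is adjacent to `u'` in `G` and `v` is adjacent to `v'` in `H`. -/
def SimpleGraph.tensorProd {α β : Type*} (G : SimpleGraph α) (H : SimpleGraph β) :
    SimpleGraph (α × β) where
  Adj x y := G.Adj x.1 y.1 ∧ H.Adj x.2 y.2
  symm := ⟨fun _ _ h => ⟨h.1.symm, h.2.symm⟩⟩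
  loopless := ⟨fun x h => G.loopless.irrefl x.1 h.1⟩

/-- A star coloring of `G` with colors in `Fin n`: a proper coloring such that every
path on four vertices (i.e. of length three) uses at least three distinct colors. -/
def SimpleGraph.IsStarColoring {α : Type*} (G : SimpleGraph α) {n : ℕ} (f : α → Fin n) : Prop :=
  (∀ ⦃u v : α⦄, G.Adj u v → f u ≠ f v) ∧
  ∀ (u v : α) (p : G.Walk u v), p.IsPath → p.length = 3 →
    3 ≤ (p.support.map f).toFinset.card

/-- The star chromatic number of `G`: the least number of colors in a star coloring. -/
noncomputable def SimpleGraph.starChromaticNumber {α : Type*} (G : SimpleGraph α) : ℕ :=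
  sInf {n : ℕ | ∃ f : α → Fin n, G.IsStarColoring f}

/-!
The vertices `(i, j)` and `(i + 2, j)` of `C₄ × Cₙ` are twins: they have the same four
neighbours. In a star colouring, twins of equal colour have a rainbow common neighbourhood, so
with four colours twins get distinct colours. Two consecutive twin pairs then use all four
colours, which forces the twin pair two columns further on to repeat the colours of the first
one; following rows `0` and `1` through four consecutive columns this produces a bicoloured path
on four vertices.

For five colours, colour each column according to a level `w x ∈ {0, 1, 2}`: level `0` gives the
colours `0, 0, 0, 0`, level `1` gives `1, 1, 2, 2` and level `2` gives `3, 3, 4, 4`, so that twins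
share a colour only at level `0`. This is a star colouring as soon as `w` is a star colouring of
`Cₙ` in which the two neighbours of every `0` differ, and the cyclic word `(0102)^a (012)^b` is
such a `w` when `n = 4a + 3b`. This leaves `n = 5`, which is settled by an explicit colouring.
-/

section BlockWord

/- Position `p` of the cyclic word `(0102)^a (012)^b` is in phase `blockPhase a p`: phases `0`–`3`
run through a block `0102` and phases `4`–`6` through a block `012`. `BlockSucc s t` says that
phase `t` may follow phase `s`, and `blockLetter` reads off the letter of a phase. -/
def blockPhase (a p : ℕ) : ℕ := if p < 4 * a then p % 4 else 4 + (p - 4 * a) % 3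

def BlockSucc (s t : ℕ) : Prop := t = s + 1 ∧ s ≠ 3 ∧ s ≠ 6 ∨ (s = 3 ∨ s = 6) ∧ (t = 0 ∨ t = 4)

def blockLetter : ℕ → Fin 3
  | 1 | 5 => 1
  | 3 | 6 => 2
  | _ => 0

theorem blockLetter_window : ∀ s₀ s₁ s₂ s₃ : Fin 7,
    BlockSucc s₀ s₁ → BlockSucc s₁ s₂ → BlockSucc s₂ s₃ →
      blockLetter s₀ ≠ blockLetter s₁ ∧ (blockLetter s₁ = 0 → blockLetter s₀ ≠ blockLetter s₂) ∧
        (blockLetter s₀ = blockLetter s₂ → blockLetter s₁ ≠ blockLetter s₃) := by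
  unfold BlockSucc
  decide

theorem blockPhase_lt (a p : ℕ) : blockPhase a p < 7 := by
  unfold blockPhase
  split_ifs <;> omega

theorem blockSucc_blockPhase {a b p : ℕ} (hp : p < 4 * a + 3 * b) :
    BlockSucc (blockPhase a p) (blockPhase a (if p + 1 < 4 * a + 3 * b then p + 1 else 0)) := by
  unfold BlockSucc blockPhase
  obtain rfl | hb := Nat.eq_zero_or_pos b <;> split_ifs <;> omega

theorem exists_eq_four_mul_add_three_mul {n : ℕ} (h3 : 3 ≤ n) (h5 : n ≠ 5) :
    ∃ a b, n = 4 * a + 3 * b := by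
  obtain h | h | h | h : n % 4 = 0 ∨ n % 4 = 1 ∨ n % 4 = 2 ∨ n % 4 = 3 := by omega
  · exact ⟨n / 4, 0, by omega⟩
  · exact ⟨n / 4 - 2, 3, by omega⟩
  · exact ⟨n / 4 - 1, 2, by omega⟩
  · exact ⟨n / 4, 1, by omega⟩

end BlockWord

namespace SimpleGraph

section StarColoring

variable {α : Type*} {G : SimpleGraph α} {k : ℕ} {f : α → Fin k}

theorem isStarColoring_iff :
    G.IsStarColoring f ↔ (∀ ⦃u v⦄, G.Adj u v → f u ≠ f v) ∧
      ∀ ⦃v₀ v₁ v₂ v₃⦄, G.Adj v₀ v₁ → G.Adj v₁ v₂ → G.Adj v₂ v₃ → v₀ ≠ v₂ → v₁ ≠ v₃ →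
        f v₀ = f v₂ → f v₁ ≠ f v₃ := by
  refine and_congr_right fun hproper => ⟨fun h v₀ v₁ v₂ v₃ h₀₁ h₁₂ h₂₃ h₀₂ h₁₃ e₀₂ e₁₃ => ?_,
    fun h u v p hp hl => ?_⟩
  · have h₀₃ : v₀ ≠ v₃ := by rintro rfl; exact hproper h₀₁ e₁₃.symm
    have hpath : (Walk.cons h₀₁ (.cons h₁₂ (.cons h₂₃ .nil))).IsPath := by
      simp [Walk.isPath_def, h₀₁.ne, h₁₂.ne, h₂₃.ne, h₀₂, h₁₃, h₀₃]
    obtain ⟨a, b, c, ha, hb, hc, hab, hac, hbc⟩ := Finset.two_lt_card_iff.mp (h _ _ _ hpath rfl)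
    simp only [Walk.support_cons, Walk.support_nil, List.map_cons, List.map_nil, e₀₂, e₁₃,
      List.mem_toFinset, List.mem_cons, List.not_mem_nil, or_false] at ha hb hc
    grind
  · rcases p with _ | ⟨h₁, _ | ⟨h₂, _ | ⟨h₃, _ | ⟨_, _⟩⟩⟩⟩ <;> simp at hl
    rename_i v₁ v₂
    have hnodup := hp.support_nodup
    simp only [Walk.support_cons, Walk.support_nil, List.nodup_cons, List.mem_cons,
      List.not_mem_nil, or_false, not_or] at hnodup
    refine Finset.two_lt_card_iff.mpr ?_
    simp only [Walk.support_cons, Walk.support_nil, List.map_cons, List.map_nil,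
      List.mem_toFinset, List.mem_cons, List.not_mem_nil, or_false]
    by_cases e₀₂ : f u = f v₂
    · exact ⟨f u, f v₁, f v, by simp, by simp, by simp, hproper h₁,
        e₀₂ ▸ hproper h₃, h h₁ h₂ h₃ hnodup.1.2.1 hnodup.2.1.2 e₀₂⟩
    · exact ⟨f u, f v₁, f v₂, by simp, by simp, by simp, hproper h₁, e₀₂, hproper h₂⟩

theorem IsStarColoring.comp_injective {l : ℕ} {g : Fin k → Fin l} (hg : g.Injective)
    (hf : G.IsStarColoring f) : G.IsStarColoring (g ∘ f) := by
  rw [isStarColoring_iff] at hf ⊢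
  exact ⟨fun _ _ huv => hg.ne (hf.1 huv),
    fun _ _ _ _ h₀₁ h₁₂ h₂₃ h₀₂ h₁₃ e => hg.ne (hf.2 h₀₁ h₁₂ h₂₃ h₀₂ h₁₃ (hg e))⟩

theorem starChromaticNumber_eq_succ_iff :
    G.starChromaticNumber = k + 1 ↔
      (∃ f : α → Fin (k + 1), G.IsStarColoring f) ∧ ¬∃ f : α → Fin k, G.IsStarColoring f :=
  Nat.sInf_upward_closed_eq_succ_iff (by
    rintro _ _ h ⟨_, hf⟩
    exact ⟨_, hf.comp_injective (Fin.castLE_injective h)⟩) k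

/-- `f` is injective on `s` together with `u`: two common neighbours `w, w'` of the same colour
would give the bicoloured path `w u w' v`. -/
theorem IsStarColoring.card_lt_of_subset_commonNeighbors (hf : G.IsStarColoring f) {u v : α}
    (huv : u ≠ v) (he : f u = f v) {s : Finset α} (hs : ↑s ⊆ G.commonNeighbors u v) :
    s.card < k := by
  rw [isStarColoring_iff] at hf
  have hu : u ∉ s := fun h => G.loopless.irrefl u (hs h).1
  have hinj : Set.InjOn f ↑(s.cons u hu) := by
    rw [Finset.coe_cons, Set.injOn_insert (by simpa using hu)]
    refine ⟨fun w hw w' hw' e => by_contra fun hne => ?_, ?_⟩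
    · exact hf.2 (hs hw).1.symm (hs hw').1 (hs hw').2.symm hne huv e he
    · rintro ⟨w, hw, e⟩
      exact hf.1 (hs hw).1 e.symm
  calc s.card < (s.cons u hu).card := by simp
    _ ≤ (Finset.univ : Finset (Fin k)).card :=
      Finset.card_le_card_of_injOn f (fun _ _ => Finset.mem_univ _) hinj
    _ = k := by simp

end StarColoring

section Cycle

open Fin.CommRing

variable {n : ℕ}

theorem cycleGraph_adj_add_one (v : Fin (n + 2)) : (cycleGraph (n + 2)).Adj v (v + 1) :=
  cycleGraph_adj.mpr (.inr (add_sub_cancel_left v 1))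

theorem cycleGraph_eq_add_one_or_eq_sub_one {v w : Fin (n + 2)}
    (h : (cycleGraph (n + 2)).Adj v w) : w = v + 1 ∨ w = v - 1 := by
  rcases cycleGraph_adj.mp h with h | h
  · exact .inr (by linear_combination -h)
  · exact .inl (by linear_combination h)

theorem _root_.Fin.ne_add_one_add_one (v : Fin (n + 3)) : v ≠ v + 1 + 1 := fun h => by
  have : (2 : Fin (n + 3)) = 0 := by linear_combination -h
  simp [Fin.ext_iff, Nat.mod_eq_of_lt (show 2 < n + 3 by omega)] at this

theorem cycleGraph_neighborSet_nontrivial (v : Fin (n + 3)) :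
    ((cycleGraph (n + 3)).neighborSet v).Nontrivial := by
  rw [cycleGraph_neighborSet]
  exact Set.nontrivial_pair fun h => (v - 1).ne_add_one_add_one (by linear_combination h)

theorem cycleGraph_four_adj_add_three (i : Fin 4) : (cycleGraph 4).Adj i (i + 3) := by
  revert i
  decide

theorem cycleGraph_four_adj_add_two_left {i j : Fin 4} :
    (cycleGraph 4).Adj (i + 2) j ↔ (cycleGraph 4).Adj i j := by
  revert i j
  decide

theorem cycleGraph_four_eq_add_two {i j l : Fin 4} (hij : (cycleGraph 4).Adj i j)
    (hjl : (cycleGraph 4).Adj j l) (hli : l ≠ i) : l = i + 2 := by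
  revert i j l
  decide

end Cycle

section LowerBound

variable {β : Type*} {H : SimpleGraph β} {f : Fin 4 × β → Fin 4}

theorem IsStarColoring.apply_ne_apply_add_two
    (hf : ((cycleGraph 4).tensorProd H).IsStarColoring f) {j : β}
    (hj : (H.neighborSet j).Nontrivial) (i : Fin 4) : f (i, j) ≠ f (i + 2, j) := by
  classical
  obtain ⟨j₁, hj₁, j₂, hj₂, hne⟩ := hj
  intro he
  have hs : ↑(({i + 1, i + 3} : Finset (Fin 4)) ×ˢ ({j₁, j₂} : Finset β)) ⊆
      ((cycleGraph 4).tensorProd H).commonNeighbors (i, j) (i + 2, j) := by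
    rintro ⟨r, j'⟩ h
    simp only [Finset.coe_product, Set.mem_prod, Finset.coe_pair, Set.mem_insert_iff,
      Set.mem_singleton_iff] at h
    have hr : (cycleGraph 4).Adj i r := by
      rcases h.1 with rfl | rfl
      exacts [cycleGraph_adj_add_one i, cycleGraph_four_adj_add_three i]
    have hj' : H.Adj j j' := by
      rcases h.2 with rfl | rfl
      exacts [hj₁, hj₂]
    exact ⟨⟨hr, hj'⟩, cycleGraph_four_adj_add_two_left.mpr hr, hj'⟩
  have := hf.card_lt_of_subset_commonNeighbors (by simp) he hs
  rw [Finset.card_product, Finset.card_pair ((by decide : ∀ i : Fin 4, i + 1 ≠ i + 3) i),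
    Finset.card_pair hne] at this
  omega

/-- The twin pairs of columns `j` and `j'` carry all four colours, and `(i, j'')` and its twin
avoid the colours of the second pair. -/
theorem IsStarColoring.exists_add_two_eq (hf : ((cycleGraph 4).tensorProd H).IsStarColoring f)
    (hH : ∀ j, (H.neighborSet j).Nontrivial) {j j' j'' : β} (h : H.Adj j j') (h' : H.Adj j' j'')
    (i : Fin 4) : f (i, j'') = f (i, j) ∨ f (i + 2, j'') = f (i, j) := by
  have hcol : ∀ r r' : Fin 4, (cycleGraph 4).Adj r r' → ∀ {x y : β}, H.Adj x y →
      f (r, x) ≠ f (r', y) := fun r r' hr x y hxy => (isStarColoring_iff.mp hf).1 ⟨hr, hxy⟩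
  have a₁ := cycleGraph_adj_add_one i
  have a₃ := cycleGraph_four_adj_add_three i
  have b₁ := cycleGraph_four_adj_add_two_left.mpr a₁
  have b₃ := cycleGraph_four_adj_add_two_left.mpr a₃
  have key : ∀ a b c d x y : Fin 4, a ≠ b → a ≠ c → a ≠ d → b ≠ c → b ≠ d → c ≠ d →
      x ≠ c → x ≠ d → y ≠ c → y ≠ d → x ≠ y → x = a ∨ y = a := by decide
  refine key _ (f (i + 2, j)) (f (i + 1, j')) (f (i + 3, j')) _ _
    (hf.apply_ne_apply_add_two (hH j) i) (hcol _ _ a₁ h) (hcol _ _ a₃ h) (hcol _ _ b₁ h)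
    (hcol _ _ b₃ h) ?_ (hcol _ _ a₁ h'.symm) (hcol _ _ a₃ h'.symm) (hcol _ _ b₁ h'.symm)
    (hcol _ _ b₃ h'.symm) (hf.apply_ne_apply_add_two (hH j'') i)
  have := hf.apply_ne_apply_add_two (hH j') (i + 1)
  rwa [(by decide : ∀ i : Fin 4, i + 1 + 2 = i + 3) i] at this

theorem not_isStarColoring_cycleGraph_four_tensorProd (hH : ∀ j, (H.neighborSet j).Nontrivial)
    {j₀ j₁ j₂ j₃ : β} (h₀₁ : H.Adj j₀ j₁) (h₁₂ : H.Adj j₁ j₂) (h₂₃ : H.Adj j₂ j₃) (h₀₂ : j₀ ≠ j₂)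
    (h₁₃ : j₁ ≠ j₃) : ¬((cycleGraph 4).tensorProd H).IsStarColoring f := by
  intro hf
  obtain ⟨i₂, hi₂, e₀₂⟩ : ∃ i₂ : Fin 4, (i₂ = 0 ∨ i₂ = 2) ∧ f (0, j₀) = f (i₂, j₂) := by
    rcases hf.exists_add_two_eq hH h₀₁ h₁₂ 0 with e | e
    exacts [⟨0, .inl rfl, e.symm⟩, ⟨2, .inr rfl, e.symm⟩]
  obtain ⟨i₃, hi₃, e₁₃⟩ : ∃ i₃ : Fin 4, (i₃ = 1 ∨ i₃ = 3) ∧ f (1, j₁) = f (i₃, j₃) := by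
    rcases hf.exists_add_two_eq hH h₁₂ h₂₃ 1 with e | e
    exacts [⟨1, .inl rfl, e.symm⟩, ⟨3, .inr rfl, e.symm⟩]
  have a₁₂ : (cycleGraph 4).Adj 1 i₂ := by rcases hi₂ with rfl | rfl <;> decide
  have a₂₃ : (cycleGraph 4).Adj i₂ i₃ := by
    rcases hi₂ with rfl | rfl <;> rcases hi₃ with rfl | rfl <;> decide
  exact (isStarColoring_iff.mp hf).2 (v₁ := (1, j₁)) (v₃ := (i₃, j₃))
    ⟨(by decide : (cycleGraph 4).Adj 0 1), h₀₁⟩ ⟨a₁₂, h₁₂⟩ ⟨a₂₃, h₂₃⟩ (by simp [h₀₂])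
    (by simp [h₁₃]) e₀₂ e₁₃

theorem not_isStarColoring_cycleGraph_four_tensorProd_cycleGraph {n : ℕ}
    (f : Fin 4 × Fin (n + 3) → Fin 4) :
    ¬((cycleGraph 4).tensorProd (cycleGraph (n + 3))).IsStarColoring f :=
  not_isStarColoring_cycleGraph_four_tensorProd cycleGraph_neighborSet_nontrivial
    (cycleGraph_adj_add_one 0) (cycleGraph_adj_add_one _) (cycleGraph_adj_add_one _)
    (Fin.ne_add_one_add_one 0) (Fin.ne_add_one_add_one _)

end LowerBound

section UpperBound

open Fin.CommRing

variable {n : ℕ}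

/-- A bicoloured path on four vertices either runs through four consecutive columns (`straight`)
or turns back at a column, which then contains an equally coloured twin pair (`twin_mid`,
`twin_next`). -/
theorem isStarColoring_of_columns {k : ℕ} (C : Fin (n + 2) → Fin 4 → Fin k)
    (proper : ∀ x r r', (cycleGraph 4).Adj r r' → C x r ≠ C (x + 1) r')
    (twin_mid : ∀ x r a b, (cycleGraph 4).Adj r a → (cycleGraph 4).Adj r b →
      C (x + 1) r = C (x + 1) (r + 2) → C x a ≠ C (x + 2) b)
    (twin_next : ∀ x r r', (cycleGraph 4).Adj r r' → C x r = C x (r + 2) →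
      C (x + 1) r' ≠ C (x + 1) (r' + 2))
    (straight : ∀ x r₀ r₁ r₂ r₃, (cycleGraph 4).Adj r₀ r₁ → (cycleGraph 4).Adj r₁ r₂ →
      (cycleGraph 4).Adj r₂ r₃ → C x r₀ = C (x + 2) r₂ → C (x + 1) r₁ ≠ C (x + 3) r₃) :
    ((cycleGraph 4).tensorProd (cycleGraph (n + 2))).IsStarColoring fun v => C v.2 v.1 := by
  have col : ∀ {x y : Fin (n + 2)}, x = y → ∀ r, C x r = C y r := fun h _ => h ▸ rfl
  rw [isStarColoring_iff]
  constructor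
  · rintro ⟨r, x⟩ ⟨r', x'⟩ ⟨hr, hx⟩
    rcases cycleGraph_eq_add_one_or_eq_sub_one hx with rfl | rfl
    · exact proper x r r' hr
    · exact fun e => proper (x - 1) r' r hr.symm (e.symm.trans (col (by ring) r))
  · rintro ⟨r₀, x₀⟩ ⟨r₁, x₁⟩ ⟨r₂, x₂⟩ ⟨r₃, x₃⟩ ⟨a₀₁, h₀₁⟩ ⟨a₁₂, h₁₂⟩ ⟨a₂₃, h₂₃⟩ h₀₂ h₁₃ e₀₂ e₁₃
    dsimp only at e₀₂ e₁₃ ⊢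
    have twin₀₂ : x₂ = x₀ → r₂ = r₀ + 2 := fun h =>
      cycleGraph_four_eq_add_two a₀₁ a₁₂ fun hr => h₀₂ (Prod.ext hr.symm h.symm)
    have twin₁₃ : x₃ = x₁ → r₃ = r₁ + 2 := fun h =>
      cycleGraph_four_eq_add_two a₁₂ a₂₃ fun hr => h₁₃ (Prod.ext hr.symm h.symm)
    rcases cycleGraph_eq_add_one_or_eq_sub_one h₀₁ with rfl | rfl <;>
      rcases cycleGraph_eq_add_one_or_eq_sub_one h₁₂ with rfl | rfl <;>
      rcases cycleGraph_eq_add_one_or_eq_sub_one h₂₃ with rfl | rfl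
    · exact straight x₀ r₀ r₁ r₂ r₃ a₀₁ a₁₂ a₂₃ (e₀₂.trans (col (by ring) r₂))
        (e₁₃.trans (col (by ring) r₃))
    · obtain rfl := twin₁₃ (by ring)
      exact twin_mid x₀ r₁ r₀ r₂ a₀₁.symm a₁₂ (e₁₃.trans (col (by ring) _))
        (e₀₂.trans (col (by ring) r₂))
    · obtain rfl := twin₀₂ (by ring)
      obtain rfl := twin₁₃ (by ring)
      exact twin_next x₀ r₀ r₁ a₀₁ (e₀₂.trans (col (by ring) _)) (e₁₃.trans (col (by ring) _))
    · obtain rfl := twin₀₂ (by ring)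
      exact twin_mid (x₀ - 1) r₀ r₃ r₁ (cycleGraph_four_adj_add_two_left.mp a₂₃) a₀₁
        ((col (by ring) r₀).trans (e₀₂.trans (col (by ring) _)))
        ((col (by ring) r₃).trans (e₁₃.symm.trans (col (by ring) r₁)))
    · obtain rfl := twin₀₂ (by ring)
      exact twin_mid (x₀ - 1) r₀ r₁ r₃ a₀₁ (cycleGraph_four_adj_add_two_left.mp a₂₃)
        ((col (by ring) r₀).trans (e₀₂.trans (col (by ring) _)))
        (e₁₃.trans (col (by ring) r₃))
    · obtain rfl := twin₀₂ (by ring)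
      obtain rfl := twin₁₃ (by ring)
      exact twin_next (x₀ - 1) r₁ r₀ a₀₁.symm (e₁₃.trans (col (by ring) _))
        ((col (by ring) r₀).trans (e₀₂.trans (col (by ring) _)))
    · obtain rfl := twin₁₃ (by ring)
      exact twin_mid (x₀ - 1 - 1) r₁ r₂ r₀ a₁₂ a₀₁.symm
        ((col (by ring) r₁).trans (e₁₃.trans (col (by ring) _)))
        (e₀₂.symm.trans (col (by ring) r₀))
    · exact straight (x₀ - 1 - 1 - 1) r₃ r₂ r₁ r₀ a₂₃.symm a₁₂.symm a₀₁.symm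
        ((col (by ring) r₃).trans (e₁₃.symm.trans (col (by ring) r₁)))
        ((col (by ring) r₂).trans (e₀₂.symm.trans (col (by ring) r₀)))

def levelColor (l : Fin 3) (r : Fin 4) : Fin 5 :=
  ![![0, 0, 0, 0], ![1, 1, 2, 2], ![3, 3, 4, 4]] l r

theorem eq_of_levelColor_eq {l l' : Fin 3} {r r' : Fin 4}
    (h : levelColor l r = levelColor l' r') : l = l' := by
  revert l l' r r'
  decide

theorem levelColor_add_two_eq_iff {l : Fin 3} {r : Fin 4} :
    levelColor l r = levelColor l (r + 2) ↔ l = 0 := by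
  revert l r
  decide

theorem isStarColoring_levelColor (w : Fin (n + 2) → Fin 3) (hadj : ∀ x, w x ≠ w (x + 1))
    (hzero : ∀ x, w (x + 1) = 0 → w x ≠ w (x + 2))
    (halt : ∀ x, w x = w (x + 2) → w (x + 1) ≠ w (x + 3)) :
    ((cycleGraph 4).tensorProd (cycleGraph (n + 2))).IsStarColoring
      fun v => levelColor (w v.2) v.1 :=
  isStarColoring_of_columns (fun x r => levelColor (w x) r)
    (fun x _ _ _ h => hadj x (eq_of_levelColor_eq h))
    (fun x _ _ _ _ _ h h' => hzero x (levelColor_add_two_eq_iff.mp h) (eq_of_levelColor_eq h'))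
    (fun x _ _ _ h h' => hadj x
      ((levelColor_add_two_eq_iff.mp h).trans (levelColor_add_two_eq_iff.mp h').symm))
    (fun x _ _ _ _ _ _ _ h h' => halt x (eq_of_levelColor_eq h) (eq_of_levelColor_eq h'))

theorem exists_isStarColoring_of_eq_four_mul_add_three_mul {a b : ℕ}
    (h : n + 2 = 4 * a + 3 * b) : ∃ f : Fin 4 × Fin (n + 2) → Fin 5,
      ((cycleGraph 4).tensorProd (cycleGraph (n + 2))).IsStarColoring f := by
  have step (x : Fin (n + 2)) : BlockSucc (blockPhase a x) (blockPhase a ↑(x + 1)) := by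
    convert blockSucc_blockPhase (b := b) (h ▸ x.isLt : (x : ℕ) < 4 * a + 3 * b) using 2
    rw [Fin.val_add_one, ← h]
    simp only [Fin.ext_iff, Fin.val_last]
    split_ifs <;> omega
  have window (x : Fin (n + 2)) := blockLetter_window ⟨_, blockPhase_lt a x⟩
    ⟨_, blockPhase_lt a ↑(x + 1)⟩ ⟨_, blockPhase_lt a ↑(x + 1 + 1)⟩
    ⟨_, blockPhase_lt a ↑(x + 1 + 1 + 1)⟩ (step x) (step _) (step _)
  refine ⟨_, isStarColoring_levelColor (fun x => blockLetter (blockPhase a x))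
    (fun x => (window x).1) (fun x => ?_) (fun x => ?_)⟩
  · simpa only [show x + 1 + 1 = x + 2 by ring] using (window x).2.1
  · have := (window x).2.2
    rwa [show x + 1 + 1 + 1 = x + 3 by ring, show x + 1 + 1 = x + 2 by ring] at this

/- `5` is the only length `n ≥ 3` that is not of the form `4a + 3b`. -/
def columnsFive : Fin 5 → Fin 4 → Fin 5 :=
  ![![1, 1, 4, 1], ![3, 2, 0, 2], ![3, 2, 0, 2], ![1, 1, 4, 1], ![4, 3, 2, 0]]

theorem isStarColoring_columnsFive :
    ((cycleGraph 4).tensorProd (cycleGraph 5)).IsStarColoring fun v => columnsFive v.2 v.1 :=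
  isStarColoring_of_columns (n := 3) columnsFive (by decide) (by decide) (by decide) (by decide)

theorem exists_isStarColoring_fin_five (hn : 1 ≤ n) :
    ∃ f : Fin 4 × Fin (n + 2) → Fin 5,
      ((cycleGraph 4).tensorProd (cycleGraph (n + 2))).IsStarColoring f := by
  obtain rfl | h5 := eq_or_ne n 3
  · exact ⟨_, isStarColoring_columnsFive⟩
  · obtain ⟨a, b, h⟩ := exists_eq_four_mul_add_three_mul (n := n + 2) (by omega) (by omega)
    exact exists_isStarColoring_of_eq_four_mul_add_three_mul h

end UpperBound

end SimpleGraph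

open SimpleGraph

theorem starChromaticNumber_C4_tensorProd_Cn (n : ℕ) (hn : 4 ≤ n) :
    ((cycleGraph 4).tensorProd (cycleGraph n)).starChromaticNumber = 5 := by
  obtain ⟨m, rfl⟩ : ∃ m, n = m + 3 := ⟨n - 3, by omega⟩
  rw [starChromaticNumber_eq_succ_iff]
  exact ⟨exists_isStarColoring_fin_five (n := m + 1) (by omega),
    fun ⟨f, hf⟩ => not_isStarColoring_cycleGraph_four_tensorProd_cycleGraph f hf⟩
end

section
/- For all integers m ≥ 3, n ≥ 3, p ≥ 1, q ≥ 1 and k, if χ_s(C_m × C_n) ≤ k then χ_s(C_{pm} × C_{qn}) ≤ k. -/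
/-! A star coloring pulls back along any locally injective homomorphism `φ`: on a four-vertex
path `a b c d`, local injectivity keeps `φ a, φ c` and `φ b, φ d` apart, so either the image is
again a four-vertex path, or `φ a = φ d`, in which case `φ a φ b φ c` is a triangle. Reduction
modulo `m` is a locally injective homomorphism `C_N → C_m` whenever `m ∣ N` and `m ≥ 3`, and
such homomorphisms are stable under the tensor product. -/

theorem Finset.three_le_card_insert_four_iff {β : Type*} [DecidableEq β] {x y z w : β}
    (hxy : x ≠ y) (hyz : y ≠ z) (hzw : z ≠ w) :
    3 ≤ ({x, y, z, w} : Finset β).card ↔ ¬(x = z ∧ y = w) := by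
  refine ⟨?_, fun h => ?_⟩
  · rintro h3 ⟨rfl, rfl⟩
    have : ({x, y, x, y} : Finset β).card ≤ 2 := by
      simpa [Finset.insert_comm x y] using Finset.card_le_two (a := x) (b := y)
    omega
  · by_cases hxz : x = z
    · have hyzw := Finset.card_eq_three.2 ⟨y, z, w, hyz, fun hyw => h ⟨hxz, hyw⟩, hzw, rfl⟩
      exact hyzw.symm.le.trans (Finset.card_le_card (Finset.subset_insert x _))
    · have hxyz := Finset.card_eq_three.2 ⟨x, y, z, hxy, hxz, hyz, rfl⟩
      refine hxyz.symm.le.trans (Finset.card_le_card ?_)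
      intro t; simp only [Finset.mem_insert, Finset.mem_singleton]; tauto

namespace SimpleGraph

variable {α β γ δ : Type*} {G : SimpleGraph α} {H : SimpleGraph β} {k : ℕ}

theorem isStarColoring_iff_s15 {f : α → Fin k} :
    G.IsStarColoring f ↔ (∀ ⦃u v⦄, G.Adj u v → f u ≠ f v) ∧
      ∀ ⦃a b c d⦄, G.Adj a b → G.Adj b c → G.Adj c d → a ≠ c → b ≠ d → a ≠ d →
        f a = f c → f b ≠ f d := by
  refine and_congr_right fun hproper => ⟨fun hpath a b c d hab hbc hcd hac hbd had => ?_,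
    fun hP4 u v p hp hlen => ?_⟩
  · have hP : (Walk.cons hab (.cons hbc (.cons hcd .nil))).IsPath := by
      simp [Walk.isPath_def, hab.ne, hbc.ne, hcd.ne, hac, hbd, had]
    have h3 := hpath a d _ hP rfl
    simp only [Walk.support_cons, Walk.support_nil, List.map_cons, List.map_nil,
      List.toFinset_cons, List.toFinset_nil, insert_empty_eq,
      Finset.three_le_card_insert_four_iff (hproper hab) (hproper hbc) (hproper hcd)] at h3
    exact fun hac' hbd' => h3 ⟨hac', hbd'⟩
  · rcases p with _ | ⟨hab, _ | ⟨hbc, _ | ⟨hcd, _ | ⟨_, _⟩⟩⟩⟩ <;>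
      simp only [Walk.length_cons, Walk.length_nil] at hlen <;> try omega
    simp only [Walk.isPath_def, Walk.support_cons, Walk.support_nil, List.nodup_cons,
      List.mem_cons, List.not_mem_nil, or_false, not_or, not_false_eq_true, List.nodup_nil,
      and_self, and_true] at hp
    obtain ⟨⟨-, hac, had⟩, ⟨-, hbd⟩, -⟩ := hp
    simp only [Walk.support_cons, Walk.support_nil, List.map_cons, List.map_nil,
      List.toFinset_cons, List.toFinset_nil, insert_empty_eq,
      Finset.three_le_card_insert_four_iff (hproper hab) (hproper hbc) (hproper hcd)]
    exact fun h => hP4 hab hbc hcd hac hbd had h.1 h.2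

theorem isStarColoring_of_injective {f : α → Fin k} (hf : f.Injective) : G.IsStarColoring f :=
  isStarColoring_iff_s15.2
    ⟨fun _ _ huv h => huv.ne (hf h), fun _ _ _ _ _ _ _ hac _ _ h => (hac (hf h)).elim⟩

def Hom.IsLocallyInjective (φ : G →g H) : Prop :=
  ∀ v, Set.InjOn φ (G.neighborSet v)

theorem IsStarColoring.comp_hom {φ : G →g H} (hφ : φ.IsLocallyInjective) {f : β → Fin k}
    (hf : H.IsStarColoring f) : G.IsStarColoring (f ∘ φ) := by
  obtain ⟨hproper, hP4⟩ := isStarColoring_iff_s15.1 hf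
  refine isStarColoring_iff_s15.2 ⟨fun u v huv => hproper (φ.map_adj huv), ?_⟩
  intro a b c d hab hbc hcd hac hbd had hfac hfbd
  have hφac : φ a ≠ φ c := fun h => hac (hφ b hab.symm hbc h)
  have hφbd : φ b ≠ φ d := fun h => hbd (hφ c hbc.symm hcd h)
  by_cases hφad : φ a = φ d
  · exact hproper (φ.map_adj hab) ((congrArg f hφad).trans hfbd.symm)
  · exact hP4 (φ.map_adj hab) (φ.map_adj hbc) (φ.map_adj hcd) hφac hφbd hφad hfac hfbd

theorem starChromaticNumber_le_of_isLocallyInjective [Finite β] {φ : G →g H}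
    (hφ : φ.IsLocallyInjective) : G.starChromaticNumber ≤ H.starChromaticNumber := by
  have : Fintype β := Fintype.ofFinite β
  obtain ⟨f, hf⟩ : H.starChromaticNumber ∈ {n | ∃ f : β → Fin n, H.IsStarColoring f} :=
    Nat.sInf_mem ⟨_, _, isStarColoring_of_injective (Fintype.equivFin β).injective⟩
  exact Nat.sInf_le ⟨f ∘ φ, hf.comp_hom hφ⟩

def Hom.tensorProd {G' : SimpleGraph γ} {H' : SimpleGraph δ} (φ : G →g G') (ψ : H →g H') :
    G.tensorProd H →g G'.tensorProd H' where
  toFun := Prod.map φ ψ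
  map_rel' h := ⟨φ.map_adj h.1, ψ.map_adj h.2⟩

theorem Hom.IsLocallyInjective.tensorProd {G' : SimpleGraph γ} {H' : SimpleGraph δ}
    {φ : G →g G'} {ψ : H →g H'} (hφ : φ.IsLocallyInjective) (hψ : ψ.IsLocallyInjective) :
    (φ.tensorProd ψ).IsLocallyInjective :=
  fun v _ hx _ hy hxy =>
    Prod.ext (hφ v.1 hx.1 hy.1 (congrArg Prod.fst hxy)) (hψ v.2 hx.2 hy.2 (congrArg Prod.snd hxy))

/- With `Fin.CommRing` open, `Fin (n + 1)` carries the ring structure of `ZMod (n + 1)`, so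
reduction modulo `m` is the ring hom `ZMod.castHom`. -/
open Fin.CommRing in
theorem exists_isLocallyInjective_cycleGraph_hom {m N : ℕ} (hm : 3 ≤ m) (hd : m ∣ N) :
    ∃ φ : cycleGraph N →g cycleGraph m, φ.IsLocallyInjective := by
  obtain rfl | hN := Nat.eq_zero_or_pos N
  · exact ⟨⟨Fin.elim0, fun {a} => Fin.elim0 a⟩, fun v => Fin.elim0 v⟩
  obtain ⟨m, rfl⟩ := Nat.exists_eq_add_of_le' (show 2 ≤ m by omega)
  have hN2 : 2 ≤ N := (by omega : 2 ≤ m + 2).trans (Nat.le_of_dvd hN hd)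
  obtain ⟨N, rfl⟩ := Nat.exists_eq_add_of_le' hN2
  let φ : Fin (N + 2) → Fin (m + 2) := ZMod.castHom hd (ZMod (m + 2))
  have φ_add_one (v) : φ (v + 1) = φ v + 1 :=
    (map_add (ZMod.castHom hd (ZMod (m + 2))) v 1).trans (congrArg _ (map_one _))
  have φ_sub_one (v) : φ (v - 1) = φ v - 1 :=
    (map_sub (ZMod.castHom hd (ZMod (m + 2))) v 1).trans (congrArg _ (map_one _))
  have image_neighborSet (v) :
      φ '' (cycleGraph _).neighborSet v = (cycleGraph _).neighborSet (φ v) := by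
    rw [cycleGraph_neighborSet, cycleGraph_neighborSet, Set.image_pair, φ_add_one, φ_sub_one]
  have injOn_neighborSet (v) : Set.InjOn φ ((cycleGraph _).neighborSet v) := by
    rw [cycleGraph_neighborSet, Set.injOn_pair, φ_add_one, φ_sub_one]
    intro h
    have h2 : ((2 : ℕ) : Fin (m + 2)) = 0 := by push_cast; linear_combination -h
    have := Nat.le_of_dvd two_pos ((CharP.cast_eq_zero_iff (Fin (m + 2)) (m + 2) 2).1 h2)
    omega
  refine ⟨⟨φ, fun {u v} huv => ?_⟩, injOn_neighborSet⟩
  have := Set.mem_image_of_mem φ (show v ∈ (cycleGraph _).neighborSet u from huv)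
  rwa [image_neighborSet] at this

end SimpleGraph

open SimpleGraph

theorem starChromaticNumber_cycleGraph_tensorProd_mul_le_general (m n p q k : ℕ)
    (hm : 3 ≤ m) (hn : 3 ≤ n)
    (h : ((cycleGraph m).tensorProd (cycleGraph n)).starChromaticNumber ≤ k) :
    ((cycleGraph (p * m)).tensorProd (cycleGraph (q * n))).starChromaticNumber ≤ k := by
  obtain ⟨φ, hφ⟩ := exists_isLocallyInjective_cycleGraph_hom hm (dvd_mul_left m p)
  obtain ⟨ψ, hψ⟩ := exists_isLocallyInjective_cycleGraph_hom hn (dvd_mul_left n q)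
  exact (starChromaticNumber_le_of_isLocallyInjective (hφ.tensorProd hψ)).trans h

theorem starChromaticNumber_cycleGraph_tensorProd_mul_le (m n p q k : ℕ)
    (hm : 3 ≤ m) (hn : 3 ≤ n) (hp : 1 ≤ p) (hq : 1 ≤ q)
    (h : ((cycleGraph m).tensorProd (cycleGraph n)).starChromaticNumber ≤ k) :
    ((cycleGraph (p * m)).tensorProd (cycleGraph (q * n))).starChromaticNumber ≤ k :=
  starChromaticNumber_cycleGraph_tensorProd_mul_le_general m n p q k hm hn h
end
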